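/- Let q ∈ (−1,0) and let m ≥ 0 be an integer. For A, B ∈ ℂ and θ ∈ ℝ let M_{A,B,θ} be the unique bounded linear operator on ℓ²(ℕ) with M_{A,B,θ} e_k = e_{k+1} + q^k(A e^{iθ} + B e^{−iθ}) e_k + (1−q^{2k}) e_{k−1} for all k ∈ ℕ. If A, B, A′, B′ ∈ ℂ satisfy AB = A′B′, then ∫_0^{2π} ∑_{k=0}^∞ q^{2k} ⟨M_{A,B,θ}^m e_k, e_k⟩ dθ = ∫_0^{2π} ∑_{k=0}^∞ q^{2k} ⟨M_{A′,B′,θ}^m e_k, e_k⟩ dθ (both inner sums converging absolutely). -/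

import Mathlib

/-- `ℓ²(ℕ)`: square-summable complex sequences. -/
noncomputable def ell2 : Type := lp (fun _ : ℕ => ℂ) 2

noncomputable instance : NormedAddCommGroup ell2 := by unfold ell2; infer_instance
noncomputable instance : InnerProductSpace ℂ ell2 := by unfold ell2; infer_instance
instance : CompleteSpace ell2 := by unfold ell2; infer_instance

/-- The standard orthonormal basis vector `e_k` of `ℓ²(ℕ)`. -/
noncomputable def eb (k : ℕ) : ell2 := (lp.single 2 k (1 : ℂ) : lp (fun _ : ℕ => ℂ) 2)

/-- The tridiagonal action `e_k ↦ e_{k+1} + q^k(A e^{iθ} + B e^{-iθ}) e_k + (1-q^{2k}) e_{k-1}`;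
when `k = 0` the last coefficient vanishes, so the natural-subtraction index is harmless. -/
noncomputable def triAction (q : ℝ) (A B : ℂ) (θ : ℝ) (k : ℕ) : ell2 :=
  eb (k + 1) +
    ((q : ℂ) ^ k * (A * Complex.exp (θ * Complex.I) + B * Complex.exp (-θ * Complex.I))) • eb k +
    ((1 : ℂ) - (q : ℂ) ^ (2 * k)) • eb (k - 1)

/-!
Write `z(θ) = A e^{iθ} + B e^{-iθ}`. The operator is `M = T + z(θ) D` with `D e_k = q^k e_k` and
`T = S + (1 - q² D²) S*`, where `S` is the unilateral shift; `T` and `D` do not depend on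
`A, B, θ`. Expanding `(T + z D)^m = ∑ₚ zᵖ Cₚ` in the noncommutative polynomial ring and using that
`X ↦ ∑ₖ q^{2k} ⟪X e_k, e_k⟫` is conjugate-linear, the integrand becomes `∑ₚ conj(z(θ))ᵖ cₚ` with
`cₚ` independent of `A, B, θ`. Integrating over a period keeps only the constant Fourier mode of
`conj(z(θ))ᵖ`, giving `2π C(p, p/2) conj(AB)^{p/2}` for even `p` and `0` for odd `p`.
-/

open scoped ENNReal InnerProductSpace ComplexConjugate lp

noncomputable section

namespace lp

variable {𝕜 : Type*} [NormedField 𝕜] {p : ℝ≥0∞}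

section Comp

variable {ι κ E : Type*} [NormedAddCommGroup E] [NormedSpace 𝕜 E]

theorem sum_rpow_comp_le_norm_rpow (hp : 0 < p.toReal) (x : lp (fun _ : ι => E) p) {σ : κ → ι}
    (hσ : σ.Injective) (s : Finset κ) :
    ∑ k ∈ s, ‖x (σ k)‖ ^ p.toReal ≤ ‖x‖ ^ p.toReal := by
  simpa using sum_rpow_le_norm_rpow hp x (s.map ⟨σ, hσ⟩)

variable [Fact (1 ≤ p)]

variable (𝕜 p) in
def compInjective (hp : p ≠ ⊤) {σ : κ → ι} (hσ : σ.Injective) :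
    lp (fun _ : ι => E) p →L[𝕜] lp (fun _ : κ => E) p :=
  have hp' : 0 < p.toReal := ENNReal.toReal_pos (zero_lt_one.trans_le Fact.out).ne' hp
  LinearMap.mkContinuous
    { toFun := fun x => ⟨fun k => x (σ k), memℓp_gen' (sum_rpow_comp_le_norm_rpow hp' x hσ)⟩
      map_add' := fun _ _ => rfl
      map_smul' := fun _ _ => rfl }
    1 fun x => by
      rw [one_mul]
      exact norm_le_of_forall_sum_le hp' (norm_nonneg _) (sum_rpow_comp_le_norm_rpow hp' x hσ)

@[simp]
theorem compInjective_apply (hp : p ≠ ⊤) {σ : κ → ι} (hσ : σ.Injective)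
    (x : lp (fun _ : ι => E) p) (k : κ) : compInjective 𝕜 p hp hσ x k = x (σ k) :=
  rfl

end Comp

section SMul

variable {ι : Type*} {E : ι → Type*} [∀ i, NormedAddCommGroup (E i)] [∀ i, NormedSpace 𝕜 (E i)]

theorem norm_smul_apply_le (w : lp (fun _ : ι => 𝕜) ∞) (x : lp E p) (i : ι) :
    ‖w i • x i‖ ≤ ‖w‖ * ‖x i‖ := by
  rw [norm_smul]
  exact mul_le_mul_of_nonneg_right (norm_apply_le_norm ENNReal.top_ne_zero w i) (norm_nonneg _)

variable [Fact (1 ≤ p)]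

variable (p E) in
def pointwiseSMul (hp : p ≠ ⊤) (w : lp (fun _ : ι => 𝕜) ∞) : lp E p →L[𝕜] lp E p :=
  have hp' : 0 < p.toReal := ENNReal.toReal_pos (zero_lt_one.trans_le Fact.out).ne' hp
  LinearMap.mkContinuous
    { toFun := fun x => ⟨fun i => w i • x i,
        (x.2.norm.const_mul ‖w‖).mono' fun i => (norm_smul_apply_le w x i).trans (le_abs_self _)⟩
      map_add' := fun x y => by ext i; exact smul_add _ _ _
      map_smul' := fun c x => by ext i; exact smul_comm _ _ _ }
    ‖w‖ fun x => by
      refine norm_le_of_forall_sum_le hp' (by positivity) fun s => ?_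
      calc ∑ i ∈ s, ‖w i • x i‖ ^ p.toReal ≤ ∑ i ∈ s, (‖w‖ * ‖x i‖) ^ p.toReal := by
            gcongr with i; exact norm_smul_apply_le w x i
        _ = ‖w‖ ^ p.toReal * ∑ i ∈ s, ‖x i‖ ^ p.toReal := by
            simp only [Real.mul_rpow (norm_nonneg _) (norm_nonneg _), Finset.mul_sum]
        _ ≤ ‖w‖ ^ p.toReal * ‖x‖ ^ p.toReal := by gcongr; exact sum_rpow_le_norm_rpow hp' x s
        _ = (‖w‖ * ‖x‖) ^ p.toReal := (Real.mul_rpow (norm_nonneg _) (norm_nonneg _)).symm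

@[simp]
theorem pointwiseSMul_apply (hp : p ≠ ⊤) (w : lp (fun _ : ι => 𝕜) ∞) (x : lp E p) (i : ι) :
    pointwiseSMul p E hp w x i = w i • x i :=
  rfl

end SMul

theorem ext_single_one {ι F : Type*} [DecidableEq ι] [AddCommMonoid F] [Module 𝕜 F]
    [TopologicalSpace F] [T2Space F] [Fact (1 ≤ p)] (hp : p ≠ ⊤)
    {T T' : lp (fun _ : ι => 𝕜) p →L[𝕜] F}
    (h : ∀ i, T (lp.single p i (1 : 𝕜)) = T' (lp.single p i 1)) : T = T' :=
  ext_continuousLinearMap hp fun i => ContinuousLinearMap.ext fun a => by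
    have hsingle : lp.single (E := fun _ : ι => 𝕜) p i a = a • lp.single p i 1 := by
      rw [← lp.single_smul, smul_eq_mul, mul_one]
    simp [hsingle, h]

theorem inner_single_one_left {ι 𝕜 : Type*} [RCLike 𝕜] [DecidableEq ι] (i : ι)
    (x : ℓ²(ι, 𝕜)) : ⟪lp.single 2 i (1 : 𝕜), x⟫_𝕜 = x i := by
  simp [inner_single_left]

end lp

open Polynomial in
theorem add_smul_pow_eq_sum_coeff {R A : Type*} [CommSemiring R] [Semiring A] [Algebra R A]
    (a b : A) (z : R) (n : ℕ) :
    (a + z • b) ^ n = ∑ p ∈ Finset.range (n + 1), z ^ p • ((C b * X + C a) ^ n).coeff p := by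
  let eval : A[X] →+* A :=
    eval₂RingHom' (RingHom.id A) (algebraMap R A z) fun c => Algebra.commutes z c |>.symm
  have hdeg : ((C b * X + C a) ^ n).natDegree < n + 1 :=
    Nat.lt_succ_of_le (natDegree_pow_le_of_le n natDegree_linear_le |>.trans (mul_one n).le)
  calc (a + z • b) ^ n = eval (C b * X + C a) ^ n := by
        rw [Algebra.smul_def, Algebra.commutes, add_comm]
        show _ = eval₂ (RingHom.id A) (algebraMap R A z) (C b * X + C a) ^ n
        simp
    _ = eval₂ (RingHom.id A) (algebraMap R A z) ((C b * X + C a) ^ n) := (map_pow eval _ n).symm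
    _ = _ := by
        rw [eval₂_eq_sum_range' _ hdeg]
        refine Finset.sum_congr rfl fun p _ => ?_
        rw [RingHom.id_apply, Algebra.smul_def, Algebra.commutes, map_pow]

section DiagonalSeries

variable {𝕜 E ι : Type*} [RCLike 𝕜] [NormedAddCommGroup E] [InnerProductSpace 𝕜 E]
  {w : ι → 𝕜} {v : ι → E}

theorem summable_mul_inner_apply_self (hw : Summable fun k => ‖w k‖) (hv : ∀ k, ‖v k‖ ≤ 1)
    (T : E →L[𝕜] E) : Summable fun k => w k * ⟪T (v k), v k⟫_𝕜 := by
  refine (hw.mul_right ‖T‖).of_norm_bounded fun k => ?_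
  rw [norm_mul]
  gcongr
  calc ‖⟪T (v k), v k⟫_𝕜‖ ≤ ‖T‖ * ‖v k‖ * ‖v k‖ :=
        (norm_inner_le_norm _ _).trans (mul_le_mul_of_nonneg_right (T.le_opNorm _) (norm_nonneg _))
    _ ≤ ‖T‖ * 1 * 1 := by gcongr <;> exact hv k
    _ = ‖T‖ := by ring

variable (w v) in
def diagonalSeries (hw : Summable fun k => ‖w k‖) (hv : ∀ k, ‖v k‖ ≤ 1) :
    (E →L[𝕜] E) →ₗ⋆[𝕜] 𝕜 where
  toFun T := ∑' k, w k * ⟪T (v k), v k⟫_𝕜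
  map_add' S T := by
    simp only [add_apply, inner_add_left, mul_add]
    exact (summable_mul_inner_apply_self hw hv S).tsum_add (summable_mul_inner_apply_self hw hv T)
  map_smul' c T := by
    simp only [smul_apply, inner_smul_left, mul_left_comm (w _), tsum_mul_left, smul_eq_mul]

end DiagonalSeries

open Complex in
theorem integral_exp_int_mul_I (n : ℤ) :
    ∫ θ in (0 : ℝ)..2 * Real.pi, exp (n * θ * I) = if n = 0 then (2 * Real.pi : ℂ) else 0 := by
  split_ifs with hn
  · simp [hn]
  · have hc : (n : ℂ) * I ≠ 0 := mul_ne_zero (Int.cast_ne_zero.mpr hn) I_ne_zero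
    simp_rw [mul_right_comm _ _ I]
    rw [integral_exp_mul_complex hc]
    have : exp (n * I * (2 * Real.pi)) = 1 := by
      rw [← exp_int_mul_two_pi_mul_I n]; ring_nf
    simp [this]

open Complex in
theorem integral_exp_add_exp_neg_pow (a b : ℂ) (p : ℕ) :
    ∫ θ in (0 : ℝ)..2 * Real.pi, (a * exp (θ * I) + b * exp (-θ * I)) ^ p =
      if Even p then 2 * Real.pi * p.choose (p / 2) * (a * b) ^ (p / 2) else 0 := by
  have hexpand (θ : ℝ) : (a * exp (θ * I) + b * exp (-θ * I)) ^ p =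
      ∑ j ∈ Finset.range (p + 1),
        a ^ j * b ^ (p - j) * p.choose j * exp (((2 * j - p : ℤ) : ℂ) * θ * I) := by
    rw [add_pow]
    refine Finset.sum_congr rfl fun j hj => ?_
    have hjp : j ≤ p := Nat.lt_succ_iff.mp (Finset.mem_range.mp hj)
    rw [mul_pow, mul_pow, ← exp_nat_mul, ← exp_nat_mul]
    have : exp ((2 * j - p : ℤ) * θ * I) = exp (j * (θ * I)) * exp ((p - j : ℕ) * (-θ * I)) := by
      rw [← exp_add]; push_cast [hjp]; ring_nf
    rw [this]; ring
  simp_rw [hexpand]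
  rw [intervalIntegral.integral_finsetSum fun j _ =>
    (by fun_prop : Continuous _).intervalIntegrable _ _]
  simp only [intervalIntegral.integral_const_mul, integral_exp_int_mul_I]
  split_ifs with hp
  · obtain ⟨r, rfl⟩ := hp
    rw [Finset.sum_eq_single r]
    · rw [if_pos (by omega), Nat.add_sub_cancel, ← two_mul, Nat.mul_div_cancel_left r two_pos,
        mul_pow]
      ring
    · intro j _ hj
      rw [if_neg (by omega), mul_zero]
    · intro h; exact absurd (Finset.mem_range.mpr (by omega)) h
  · refine Finset.sum_eq_zero fun j _ => ?_
    rw [if_neg (by intro h; exact hp ⟨j, by omega⟩), mul_zero]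

theorem integral_diagonalSeries_add_smul_pow {ι E : Type*} [NormedAddCommGroup E]
    [InnerProductSpace ℂ E] {w : ι → ℂ} {v : ι → E} (hw : Summable fun k => ‖w k‖)
    (hv : ∀ k, ‖v k‖ ≤ 1) (a b : E →L[ℂ] E) (A B : ℂ) (m : ℕ) :
    ∫ θ in (0 : ℝ)..2 * Real.pi, diagonalSeries w v hw hv
        ((a + (A * Complex.exp (θ * Complex.I) + B * Complex.exp (-θ * Complex.I)) • b) ^ m) =
      ∑ p ∈ Finset.range (m + 1),
        (if Even p then 2 * Real.pi * p.choose (p / 2) * conj (A * B) ^ (p / 2) else 0) *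
          diagonalSeries w v hw hv
            (((Polynomial.C b * Polynomial.X + Polynomial.C a) ^ m).coeff p) := by
  have hconj (θ : ℝ) : conj (A * Complex.exp (θ * Complex.I) + B * Complex.exp (-θ * Complex.I)) =
      conj B * Complex.exp (θ * Complex.I) + conj A * Complex.exp (-θ * Complex.I) := by
    simp only [map_add, map_mul, ← Complex.exp_conj, map_neg, Complex.conj_ofReal, Complex.conj_I]
    ring_nf
  simp_rw [add_smul_pow_eq_sum_coeff, map_sum, map_smulₛₗ, map_pow, hconj, smul_eq_mul]
  rw [intervalIntegral.integral_finsetSum fun p _ =>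
    (by fun_prop : Continuous _).intervalIntegrable _ _]
  refine Finset.sum_congr rfl fun p _ => ?_
  rw [intervalIntegral.integral_mul_const, integral_exp_add_exp_neg_pow, map_mul, mul_comm (conj A)]

namespace TridiagonalModel

def leftShift : ℓ²(ℕ, ℂ) →L[ℂ] ℓ²(ℕ, ℂ) :=
  lp.compInjective ℂ 2 ENNReal.ofNat_ne_top Nat.succ_injective

def rightShift : ℓ²(ℕ, ℂ) →L[ℂ] ℓ²(ℕ, ℂ) := ContinuousLinearMap.adjoint leftShift

def powSeq (q : ℂ) (hq : ‖q‖ ≤ 1) : lp (fun _ : ℕ => ℂ) ∞ :=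
  ⟨fun n => q ^ n, memℓp_infty ⟨1, by
    rintro _ ⟨n, rfl⟩
    simpa using pow_le_one₀ (norm_nonneg q) hq⟩⟩

def diag (q : ℂ) (hq : ‖q‖ ≤ 1) : ℓ²(ℕ, ℂ) →L[ℂ] ℓ²(ℕ, ℂ) :=
  lp.pointwiseSMul 2 _ ENNReal.ofNat_ne_top (powSeq q hq)

theorem leftShift_single_zero : leftShift (lp.single 2 0 1) = 0 := by
  ext n; simp [leftShift, lp.single_apply]

theorem leftShift_single_succ (k : ℕ) : leftShift (lp.single 2 (k + 1) 1) = lp.single 2 k 1 := by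
  ext n; simp [leftShift, lp.single_apply, Pi.single_apply]

theorem rightShift_single (k : ℕ) : rightShift (lp.single 2 k 1) = lp.single 2 (k + 1) 1 :=
  ext_inner_right ℂ fun x => by
    rw [rightShift, ContinuousLinearMap.adjoint_inner_left, lp.inner_single_one_left,
      lp.inner_single_one_left]
    rfl

theorem diag_single (q : ℂ) (hq : ‖q‖ ≤ 1) (k : ℕ) :
    diag q hq (lp.single 2 k 1) = q ^ k • lp.single 2 k 1 := by
  ext n; by_cases h : n = k <;> simp [diag, powSeq, lp.single_apply, h]

-- The weighted backward shift `(lowering x)ₙ = (1 - q^{2(n+1)}) xₙ₊₁`.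
def lowering (q : ℂ) (hq : ‖q‖ ≤ 1) : ℓ²(ℕ, ℂ) →L[ℂ] ℓ²(ℕ, ℂ) :=
  (1 - q ^ 2 • diag q hq ^ 2) * leftShift

theorem lowering_single (q : ℂ) (hq : ‖q‖ ≤ 1) (k : ℕ) :
    lowering q hq (lp.single 2 k 1) = (1 - q ^ (2 * k)) • lp.single 2 (k - 1) 1 := by
  cases k with
  | zero => simp [lowering, leftShift_single_zero]
  | succ k =>
    simp only [lowering, mul_apply_eq_comp, leftShift_single_succ, sub_apply, pow_two,
      one_apply_eq_self, smul_apply, diag_single, map_smul, smul_smul, Nat.add_sub_cancel]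
    rw [sub_smul, one_smul]
    ring_nf

def jacobiOp (q : ℂ) (hq : ‖q‖ ≤ 1) (z : ℂ) : ℓ²(ℕ, ℂ) →L[ℂ] ℓ²(ℕ, ℂ) :=
  rightShift + lowering q hq + z • diag q hq

theorem jacobiOp_single (q : ℂ) (hq : ‖q‖ ≤ 1) (z : ℂ) (k : ℕ) :
    jacobiOp q hq z (lp.single 2 k 1) = lp.single 2 (k + 1) 1 + (q ^ k * z) • lp.single 2 k 1 +
      (1 - q ^ (2 * k)) • lp.single 2 (k - 1) 1 := by
  rw [jacobiOp, add_apply, add_apply, smul_apply, rightShift_single, lowering_single, diag_single,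
    smul_smul, mul_comm z]
  abel

-- `ell2`, its instances and `eb` unfold to `ℓ²(ℕ, ℂ)` and `lp.single`, so this is
-- `jacobiOp_single` up to definitional unfolding.
theorem jacobiOp_apply_eb (q : ℝ) (hq : ‖(q : ℂ)‖ ≤ 1) (A B : ℂ) (θ : ℝ) (k : ℕ) :
    (jacobiOp q hq (A * Complex.exp (θ * Complex.I) + B * Complex.exp (-θ * Complex.I)) :
      ell2 →L[ℂ] ell2) (eb k) = triAction q A B θ k :=
  jacobiOp_single _ _ _ k

theorem eq_jacobiOp_of_apply_eb {q : ℝ} (hq : ‖(q : ℂ)‖ ≤ 1) {A B : ℂ} {θ : ℝ}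
    {M : ell2 →L[ℂ] ell2} (hM : ∀ k, M (eb k) = triAction q A B θ k) :
    M = jacobiOp q hq (A * Complex.exp (θ * Complex.I) + B * Complex.exp (-θ * Complex.I)) :=
  lp.ext_single_one ENNReal.ofNat_ne_top fun k => (hM k).trans (jacobiOp_apply_eb q hq A B θ k).symm

theorem summable_norm_pow_two_mul {q : ℂ} (hq : ‖q‖ < 1) : Summable fun k => ‖q ^ (2 * k)‖ := by
  simpa [pow_mul] using
    summable_geometric_of_lt_one (by positivity) (pow_lt_one₀ (norm_nonneg q) hq two_ne_zero)

theorem norm_single_one_le (k : ℕ) : ‖lp.single (E := fun _ : ℕ => ℂ) 2 k 1‖ ≤ 1 := by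
  simp [lp.norm_single]

theorem integral_tsum_inner_jacobiOp_pow {q : ℂ} (hq : ‖q‖ < 1) (A B : ℂ) (m : ℕ) :
    ∫ θ in (0 : ℝ)..2 * Real.pi, ∑' k : ℕ, q ^ (2 * k) *
      ⟪(jacobiOp q hq.le (A * Complex.exp (θ * Complex.I) + B * Complex.exp (-θ * Complex.I)) ^ m)
        (lp.single 2 k 1), lp.single 2 k 1⟫_ℂ =
      ∑ p ∈ Finset.range (m + 1),
        (if Even p then 2 * Real.pi * p.choose (p / 2) * conj (A * B) ^ (p / 2) else 0) *
          diagonalSeries (fun k => q ^ (2 * k)) (fun k => lp.single 2 k 1)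
            (summable_norm_pow_two_mul hq) norm_single_one_le
            (((Polynomial.C (diag q hq.le) * Polynomial.X +
              Polynomial.C (rightShift + lowering q hq.le)) ^ m).coeff p) :=
  integral_diagonalSeries_add_smul_pow _ _ _ _ A B m

end TridiagonalModel

end

open TridiagonalModel

theorem stmt13 (q : ℝ) (hq : q ∈ Set.Ioo (-1 : ℝ) 0) (m : ℕ) :
    (∀ A B : ℂ, ∀ θ : ℝ, ∃! M : ell2 →L[ℂ] ell2, ∀ k : ℕ, M (eb k) = triAction q A B θ k) ∧
    (∀ A B A' B' : ℂ, A * B = A' * B' →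
      ∀ M M' : ℝ → (ell2 →L[ℂ] ell2),
        (∀ θ : ℝ, ∀ k : ℕ, M θ (eb k) = triAction q A B θ k) →
        (∀ θ : ℝ, ∀ k : ℕ, M' θ (eb k) = triAction q A' B' θ k) →
        (∫ θ in (0 : ℝ)..(2 * Real.pi),
            ∑' k : ℕ, (q : ℂ) ^ (2 * k) * (inner ℂ ((M θ ^ m) (eb k)) (eb k) : ℂ)) =
          ∫ θ in (0 : ℝ)..(2 * Real.pi),
            ∑' k : ℕ, (q : ℂ) ^ (2 * k) * (inner ℂ ((M' θ ^ m) (eb k)) (eb k) : ℂ)) := by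
  have hq_norm : ‖(q : ℂ)‖ < 1 := by
    rw [Complex.norm_real, Real.norm_eq_abs, abs_lt]
    exact ⟨hq.1, hq.2.trans one_pos⟩
  refine ⟨fun A B θ => ⟨_, jacobiOp_apply_eb q hq_norm.le A B θ,
    fun M hM => eq_jacobiOp_of_apply_eb hq_norm.le hM⟩, ?_⟩
  intro A B A' B' hAB M M' hM hM'
  obtain rfl := funext fun θ => eq_jacobiOp_of_apply_eb hq_norm.le (hM θ)
  obtain rfl := funext fun θ => eq_jacobiOp_of_apply_eb hq_norm.le (hM' θ)
  exact (integral_tsum_inner_jacobiOp_pow hq_norm A B m).trans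
    (hAB ▸ (integral_tsum_inner_jacobiOp_pow hq_norm A' B' m).symm)
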